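/- Let A, B, K : ℝ → (real matrix-valued functions) of sizes n×n, n×m and m×n respectively, and set A_cl(t) = A(t) + B(t)·K(t). Let F be a real n×n matrix and L : ℝ → (real n×n matrices) take invertible values and satisfy, at every t, the derivative identity L′(t) = A_cl(t)·L(t) − L(t)·F. Let Ŝ be a real m×n matrix such that (i) for every z ∈ ℝⁿ with Ŝ·z = 0 one has Ŝ·F·z = 0, and (ii) the m×m matrix Ŝ·L(t)⁻¹·B(t) is invertible for every t. Suppose y : ℝ → ℝⁿ and w : ℝ → ℝᵐ are such that at every t, y has derivative A(t)·y(t) + B(t)·w(t), and Ŝ·L(t)⁻¹·y(t) = 0 for all t. Then w(t) = K(t)·y(t) for every t. (Thus, when confined to the sliding manifold defined by S(t) = Ŝ·L(t)⁻¹, the system ẏ = A(t)y + B(t)(u + Δ) experiences the equivalent control u_eq = K(t)·y − Δ.) -/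

import Mathlib

/-!
In the coordinates `z = L⁻¹ y` the Sylvester equation `L' = (A + B K) L - L F` turns
`y' = A y + B w` into `z' = F z + L⁻¹ B (w - K y)`. On the sliding manifold `Ŝ z ≡ 0`, so
`Ŝ z' = 0`; since `ker Ŝ` is `F`-invariant, `Ŝ F z = 0`, which leaves `Ŝ L⁻¹ B (w - K y) = 0`,
and invertibility of `Ŝ L⁻¹ B` gives `w = K y`.
-/

open Filter Matrix Topology

attribute [local instance] Matrix.normedAddCommGroup Matrix.normedSpace

section MatrixCalculus

variable {𝕜 : Type*} [NontriviallyNormedField 𝕜] {m n : Type*} {t : 𝕜}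

theorem HasDerivAt.matrix_mulVec [Fintype n] {M : 𝕜 → Matrix m n 𝕜} {v : 𝕜 → n → 𝕜}
    {M' : Matrix m n 𝕜} {v' : n → 𝕜} (hM : HasDerivAt M M' t) (hv : HasDerivAt v v' t) :
    HasDerivAt (fun s => M s *ᵥ v s) (M' *ᵥ v t + M t *ᵥ v') t := by
  refine hasDerivAt_pi.mpr fun i => ?_
  have hMij (b) : HasDerivAt (fun s => M s i b) (M' i b) t :=
    hasDerivAt_pi.mp (hasDerivAt_pi.mp hM i) b
  have hvj (b) : HasDerivAt (fun s => v s b) (v' b) t := hasDerivAt_pi.mp hv b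
  simpa only [mulVec, dotProduct, Pi.add_apply, Pi.mul_apply, ← Finset.sum_add_distrib] using
    HasDerivAt.fun_sum fun j _ => (hMij j).mul (hvj j)

theorem HasDerivAt.matrix_inv [Fintype n] [DecidableEq n] {L : 𝕜 → Matrix n n 𝕜}
    {L' : Matrix n n 𝕜} (hL : HasDerivAt L L' t) (ht : IsUnit (L t)) :
    HasDerivAt (fun s => (L s)⁻¹) (-((L t)⁻¹ * L' * (L t)⁻¹)) t := by
  have hdet : (L t).det ≠ 0 := ((isUnit_iff_isUnit_det _).mp ht).ne_zero
  have hinv : ContinuousAt (fun s => (L s)⁻¹) t := by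
    refine (continuousAt_matrix_inv _ ?_).comp hL.continuousAt
    rw [Ring.inverse_eq_inv']
    exact continuousAt_inv₀ hdet
  have hunit : ∀ᶠ s in 𝓝[≠] t, IsUnit (L s) := by
    refine nhdsWithin_le_nhds ?_
    filter_upwards [(continuous_id.matrix_det.continuousAt.comp hL.continuousAt).eventually_ne
      hdet] with s hs
    exact (isUnit_iff_isUnit_det _).mpr (isUnit_iff_ne_zero.mpr hs)
  refine hasDerivAt_iff_tendsto_slope.mpr <| (((hinv.tendsto.mono_left nhdsWithin_le_nhds).mul
    (hasDerivAt_iff_tendsto_slope.mp hL)).mul tendsto_const_nhds).neg.congr' ?_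
  filter_upwards [hunit] with s hs
  -- `L(s)⁻¹ - L(t)⁻¹ = L(s)⁻¹ (L(t) - L(s)) L(t)⁻¹`
  rw [slope_def_module, slope_def_module, Matrix.mul_smul, Matrix.smul_mul, ← smul_neg,
    Matrix.mul_sub, Matrix.sub_mul, nonsing_inv_mul _ ((isUnit_iff_isUnit_det _).mp hs), one_mul,
    Matrix.mul_assoc, mul_nonsing_inv _ ((isUnit_iff_isUnit_det _).mp ht), mul_one, neg_sub]

theorem hasDerivAt_inv_mulVec_of_hasDerivAt_sylvester [Fintype n] [DecidableEq n] [Fintype m]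
    {A : 𝕜 → Matrix n n 𝕜} {B : 𝕜 → Matrix n m 𝕜} {K : 𝕜 → Matrix m n 𝕜} {F : Matrix n n 𝕜}
    {L : 𝕜 → Matrix n n 𝕜} {y : 𝕜 → n → 𝕜} {w : 𝕜 → m → 𝕜} (ht : IsUnit (L t))
    (hL : HasDerivAt L ((A t + B t * K t) * L t - L t * F) t)
    (hy : HasDerivAt y (A t *ᵥ y t + B t *ᵥ w t) t) :
    HasDerivAt (fun s => (L s)⁻¹ *ᵥ y s)
      (F *ᵥ ((L t)⁻¹ *ᵥ y t) + ((L t)⁻¹ * B t) *ᵥ (w t - K t *ᵥ y t)) t := by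
  set N := (L t)⁻¹
  have hNL : N * L t = 1 := nonsing_inv_mul _ ((isUnit_iff_isUnit_det _).mp ht)
  have hLN : L t * N = 1 := mul_nonsing_inv _ ((isUnit_iff_isUnit_det _).mp ht)
  have hinv_deriv : -(N * ((A t + B t * K t) * L t - L t * F) * N) =
      F * N - N * A t - N * B t * K t := by
    rw [Matrix.mul_sub, Matrix.sub_mul, Matrix.mul_assoc, Matrix.mul_assoc, hLN, Matrix.mul_one,
      ← Matrix.mul_assoc N (L t), hNL, Matrix.one_mul, Matrix.mul_add, ← Matrix.mul_assoc N (B t)]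
    abel
  convert (hL.matrix_inv ht).matrix_mulVec hy using 1
  rw [hinv_deriv]
  simp only [sub_mulVec, mulVec_sub, mulVec_add, ← mulVec_mulVec]
  abel

end MatrixCalculus

/-- Equivalent control on the sliding manifold defined by `S(t) = Ŝ·L(t)⁻¹`:
if `L′ = A_cl·L − L·F` with `A_cl = A + B·K`, `Ŝ` annihilates an `F`-invariant
subspace, `Ŝ·L(t)⁻¹·B(t)` is invertible, `ẏ = A(t)·y + B(t)·w` and
`Ŝ·L(t)⁻¹·y(t) ≡ 0`, then `w(t) = K(t)·y(t)` for every `t`. -/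
theorem stmt8 {n m : ℕ}
    (A : ℝ → Matrix (Fin n) (Fin n) ℝ) (B : ℝ → Matrix (Fin n) (Fin m) ℝ)
    (K : ℝ → Matrix (Fin m) (Fin n) ℝ)
    (F : Matrix (Fin n) (Fin n) ℝ) (L : ℝ → Matrix (Fin n) (Fin n) ℝ)
    (hLinv : ∀ t, IsUnit (L t))
    (hL : ∀ t, HasDerivAt L ((A t + B t * K t) * L t - L t * F) t)
    (Shat : Matrix (Fin m) (Fin n) ℝ)
    (hF : ∀ z : Fin n → ℝ, Shat.mulVec z = 0 → Shat.mulVec (F.mulVec z) = 0)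
    (hSB : ∀ t, IsUnit (Shat * (L t)⁻¹ * B t))
    (y : ℝ → Fin n → ℝ) (w : ℝ → Fin m → ℝ)
    (hy : ∀ t, HasDerivAt y ((A t).mulVec (y t) + (B t).mulVec (w t)) t)
    (hslide : ∀ t, (Shat * (L t)⁻¹).mulVec (y t) = 0) :
    ∀ t, w t = (K t).mulVec (y t) := by
  intro t
  have hsliding : ∀ s, Shat *ᵥ ((L s)⁻¹ *ᵥ y s) = 0 := fun s => by rw [mulVec_mulVec, hslide]
  have hderiv := (hasDerivAt_const t Shat).matrix_mulVec
    (hasDerivAt_inv_mulVec_of_hasDerivAt_sylvester (hLinv t) (hL t) (hy t))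
  have hderiv_zero : HasDerivAt (fun s => Shat *ᵥ ((L s)⁻¹ *ᵥ y s)) 0 t := by
    simpa only [hsliding] using hasDerivAt_const t (0 : Fin m → ℝ)
  have hkernel := hderiv.unique hderiv_zero
  rw [zero_mulVec, zero_add, mulVec_add, hF _ (hsliding t), zero_add, mulVec_mulVec,
    ← Matrix.mul_assoc] at hkernel
  exact sub_eq_zero.mp <|
    eq_zero_of_mulVec_eq_zero ((isUnit_iff_isUnit_det _).mp (hSB t)).ne_zero hkernel
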